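/- For real β with |β| ≤ 1 and any real α, ∫_{-∞}^{∞} Li_1(β e^{2iαx - x²}) dx = √π · Li_{3/2}(β e^{-α²}), where Li_1(z) = -log(1-z). -/

import Mathlib

/-!
For `x ≠ 0` the argument `z = β e^{2iαx - x²}` has modulus `|β| e^{-x²} < 1`, so
`Li₁ z = ∑_{m ≥ 1} z^m / m`. The `m`-th term `β^m e^{-m x² + 2iαm x} / m` is a Gaussian, whose
integral is `√(π/m) (β e^{-α²})^m / m = √π (β e^{-α²})^m / m^{3/2}`; the integrals of the moduli
are `O(m^{-3/2})`, so the series may be integrated term by term.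
-/

open Complex MeasureTheory

/-- The polylogarithm `Li ν z = ∑_{n ≥ 1} z^n / n^ν` (series definition). -/
noncomputable def Li (ν : ℂ) (z : ℂ) : ℂ := ∑' n : ℕ, z ^ (n + 1) / ((n : ℂ) + 1) ^ ν

/-- `Li₁ z = -log(1-z)`, principal branch. -/
noncomputable def Li1 (z : ℂ) : ℂ := -Complex.log (1 - z)

open scoped Real

theorem hasSum_Li1 {z : ℂ} (hz : ‖z‖ < 1) :
    HasSum (fun n : ℕ => z ^ (n + 1) / ((n : ℂ) + 1)) (Li1 z) := by
  simpa [Li1] using (hasSum_nat_add_iff' 1).mpr (hasSum_taylorSeries_neg_log hz)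

theorem sqrt_div_div_self {b : ℝ} (hb : 0 ≤ b) (a : ℝ) :
    √(a / b) / b = √a / b ^ (3 / 2 : ℝ) := by
  rw [Real.sqrt_div' a hb, div_div, Real.sqrt_eq_rpow b, ← Real.rpow_add_one' hb (by norm_num)]
  norm_num

theorem cpow_half_div_div_self {a b : ℝ} (ha : 0 ≤ a) (hb : 0 ≤ b) :
    ((a : ℂ) / b) ^ (1 / 2 : ℂ) / b = (√a : ℂ) / (b : ℂ) ^ (3 / 2 : ℂ) := by
  have key := congrArg ofReal (sqrt_div_div_self hb a)
  rw [Real.sqrt_eq_rpow, ofReal_div, ofReal_div, ofReal_cpow (div_nonneg ha hb),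
    ofReal_cpow hb] at key
  simpa using key

theorem norm_mul_cexp_spiral (w : ℂ) (α x : ℝ) :
    ‖w * cexp (2 * I * α * x - x ^ 2)‖ = ‖w‖ * Real.exp (-x ^ 2) := by
  rw [norm_mul, norm_exp]
  simp [← ofReal_pow]

theorem norm_mul_cexp_spiral_lt_one {w : ℂ} (hw : ‖w‖ ≤ 1) (α : ℝ) {x : ℝ} (hx : x ≠ 0) :
    ‖w * cexp (2 * I * α * x - x ^ 2)‖ < 1 := by
  rw [norm_mul_cexp_spiral]
  calc ‖w‖ * Real.exp (-x ^ 2) ≤ 1 * Real.exp (-x ^ 2) := by gcongr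
    _ < 1 := by rw [one_mul, Real.exp_lt_one_iff, neg_lt_zero]; positivity

theorem mul_cexp_spiral_pow (w : ℂ) (α x : ℝ) (m : ℕ) :
    (w * cexp (2 * I * α * x - x ^ 2)) ^ m
      = w ^ m * cexp (-m * x ^ 2 + 2 * I * α * m * x + 0) := by
  rw [mul_pow, ← exp_nat_mul]
  ring_nf

theorem integrable_mul_cexp_spiral_pow (w : ℂ) (α : ℝ) {m : ℕ} (hm : m ≠ 0) :
    Integrable fun x : ℝ => (w * cexp (2 * I * α * x - x ^ 2)) ^ m := by
  simp_rw [mul_cexp_spiral_pow]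
  exact (integrable_cexp_quadratic (by simpa [Nat.pos_iff_ne_zero]) _ _).const_mul _

theorem integral_mul_cexp_spiral_pow (w : ℂ) (α : ℝ) {m : ℕ} (hm : m ≠ 0) :
    ∫ x : ℝ, (w * cexp (2 * I * α * x - x ^ 2)) ^ m
      = (π / m) ^ (1 / 2 : ℂ) * (w * cexp (-α ^ 2)) ^ m := by
  have hexp : (0 : ℂ) - (2 * I * α * m) ^ 2 / (4 * -m) = m * -α ^ 2 := by
    field_simp
    linear_combination (4 * α ^ 2 * m) * I_sq
  simp_rw [mul_cexp_spiral_pow, integral_const_mul]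
  rw [integral_cexp_quadratic (by simpa [Nat.pos_iff_ne_zero]), neg_neg, hexp, exp_nat_mul,
    mul_pow w]
  ring

theorem integral_mul_cexp_spiral_pow_div (w : ℂ) (α : ℝ) {m : ℕ} (hm : m ≠ 0) :
    ∫ x : ℝ, (w * cexp (2 * I * α * x - x ^ 2)) ^ m / m
      = √π * (w * cexp (-α ^ 2)) ^ m / (m : ℂ) ^ (3 / 2 : ℂ) := by
  rw [integral_div, integral_mul_cexp_spiral_pow w α hm, mul_div_right_comm, ← ofReal_natCast,
    cpow_half_div_div_self Real.pi_pos.le m.cast_nonneg]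
  ring

theorem integral_norm_mul_cexp_spiral_pow (w : ℂ) (α : ℝ) (m : ℕ) :
    ∫ x : ℝ, ‖(w * cexp (2 * I * α * x - x ^ 2)) ^ m‖ = ‖w‖ ^ m * √(π / m) := by
  simp_rw [norm_pow, norm_mul_cexp_spiral, mul_pow, ← Real.exp_nat_mul, integral_const_mul,
    mul_neg, ← neg_mul, integral_gaussian]

theorem summable_integral_norm_mul_cexp_spiral_pow_div {w : ℂ} (hw : ‖w‖ ≤ 1) (α : ℝ) :
    Summable fun n : ℕ =>
      ∫ x : ℝ, ‖(w * cexp (2 * I * α * x - x ^ 2)) ^ (n + 1) / ((n : ℂ) + 1)‖ := by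
  have hdom : Summable fun n : ℕ => √π / ((n : ℝ) + 1) ^ (3 / 2 : ℝ) := by
    refine (((Real.summable_one_div_nat_add_rpow 1 (3 / 2)).mpr (by norm_num)).mul_left √π).congr
      fun n => ?_
    rw [abs_of_nonneg (by positivity), mul_one_div]
  refine hdom.of_nonneg_of_le (fun n => integral_nonneg fun _ => norm_nonneg _) fun n => ?_
  have hn : (0 : ℝ) ≤ (n : ℝ) + 1 := by positivity
  calc ∫ x : ℝ, ‖(w * cexp (2 * I * α * x - x ^ 2)) ^ (n + 1) / ((n : ℂ) + 1)‖
      = ‖w‖ ^ (n + 1) * (√(π / ((n : ℝ) + 1)) / ((n : ℝ) + 1)) := by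
        simp_rw [norm_div, integral_div, integral_norm_mul_cexp_spiral_pow]
        rw [← Nat.cast_add_one, norm_natCast, mul_div_assoc]
        push_cast
        ring
    _ ≤ 1 * (√(π / ((n : ℝ) + 1)) / ((n : ℝ) + 1)) := by
        gcongr
        exact pow_le_one₀ (norm_nonneg w) hw
    _ = √π / ((n : ℝ) + 1) ^ (3 / 2 : ℝ) := by rw [one_mul, sqrt_div_div_self hn]

/-- For real `β` with `|β| ≤ 1` and real `α`,
`∫_{-∞}^∞ Li₁(β e^{2iαx-x²}) dx = √π Li_{3/2}(β e^{-α²})`. -/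
theorem integral_li1_spiral (β α : ℝ) (hβ : |β| ≤ 1) :
    ∫ x : ℝ, Li1 ((β : ℂ) * Complex.exp (2 * Complex.I * (α : ℂ) * (x : ℂ) - (x : ℂ) ^ 2))
      = (Real.sqrt Real.pi : ℂ) * Li (3 / 2) ((β : ℂ) * Complex.exp (-(α : ℂ) ^ 2)) := by
  have hβ' : ‖(β : ℂ)‖ ≤ 1 := by rwa [norm_real, Real.norm_eq_abs]
  have hseries : ∀ᵐ x : ℝ, Li1 (β * cexp (2 * I * α * x - x ^ 2))
      = ∑' n : ℕ, (β * cexp (2 * I * α * x - x ^ 2)) ^ (n + 1) / ((n : ℂ) + 1) := by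
    filter_upwards [Measure.ae_ne volume 0] with x hx
    exact (hasSum_Li1 (norm_mul_cexp_spiral_lt_one hβ' α hx)).tsum_eq.symm
  have hterm (n : ℕ) : ∫ x : ℝ, (β * cexp (2 * I * α * x - x ^ 2)) ^ (n + 1) / ((n : ℂ) + 1)
      = √π * ((β * cexp (-α ^ 2)) ^ (n + 1) / ((n : ℂ) + 1) ^ (3 / 2 : ℂ)) := by
    simpa [mul_div_assoc] using integral_mul_cexp_spiral_pow_div (β : ℂ) α n.succ_ne_zero
  rw [integral_congr_ae hseries, ← integral_tsum_of_summable_integral_norm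
    (fun n => (integrable_mul_cexp_spiral_pow β α n.succ_ne_zero).div_const _)
    (summable_integral_norm_mul_cexp_spiral_pow_div hβ' α), Li, ← tsum_mul_left]
  exact tsum_congr hterm
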